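/- arXiv:2007.09958 — 3 statements merged into one kernel-verified Lean document; each statement's English description precedes it below -/
import Mathlib

section
/- Let G be a group acting primitively on a finite set Ω with |Ω| = d, and let A ⊆ Ω be a subset with 0 < |A| ≤ d−2 such that the pointwise stabilizer of A in G acts transitively on Ω \ A. Then the action of G on Ω is 2-transitive. -/
open Pointwise

namespace MulAction

variable {G α : Type*} [Group G] [MulAction G α]

theorem isPreprimitive_of_forall_smul_eq_or_disjoint [IsPretransitive G α]
    (h : ∀ B : Set α, B.Nonempty → (∀ g : G, g • B = B ∨ Disjoint (g • B) B) →
      (∃ x, B = {x}) ∨ B = Set.univ) :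
    IsPreprimitive G α where
  isTrivialBlock_of_isBlock {B} hB := by
    rcases B.eq_empty_or_nonempty with rfl | hB_ne
    · exact Or.inl Set.subsingleton_empty
    rcases h B hB_ne (isBlock_iff_smul_eq_or_disjoint.mp hB) with ⟨x, rfl⟩ | hB_univ
    · exact Or.inl Set.subsingleton_singleton
    · exact Or.inr hB_univ

theorem isPretransitive_ofFixingSubgroup_of_forall_exists_smul_eq {s : Set α}
    (h : ∀ x ∈ sᶜ, ∀ y ∈ sᶜ, ∃ g : G, (∀ a ∈ s, g • a = a) ∧ g • x = y) :
    IsPretransitive (fixingSubgroup G s) (SubMulAction.ofFixingSubgroup G s) where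
  exists_smul_eq x y := by
    obtain ⟨g, hg_fix, hgxy⟩ := h x x.prop y y.prop
    exact ⟨⟨g, (mem_fixingSubgroup_iff G).mpr hg_fix⟩, Subtype.ext hgxy⟩

theorem IsMultiplyPretransitive.exists_smul_apply_eq {n : ℕ} [IsMultiplyPretransitive G α n]
    (m t : Fin n ↪ α) : ∃ g : G, ∀ j, g • m j = t j := by
  obtain ⟨g, hg⟩ := exists_smul_eq G m t
  exact ⟨g, fun j => by rw [← Function.Embedding.smul_apply, hg]⟩

end MulAction

/-- Let `G` act primitively on a finite set `Ω` with `|Ω| = d` (transitively, and every block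
is a singleton or all of `Ω`), and let `A ⊆ Ω` with `0 < |A| ≤ d - 2` be such that the
pointwise stabilizer of `A` acts transitively on `Ω \ A`. Then the action of `G` on `Ω` is
`2`-transitive. -/
theorem two_transitive_of_primitive_of_stabilizer_transitive {G Ω : Type*} [Group G]
    [MulAction G Ω] [Fintype Ω]
    (htrans : ∀ x y : Ω, ∃ g : G, g • x = y)
    (hprim : ∀ B : Set Ω, B.Nonempty → (∀ g : G, g • B = B ∨ Disjoint (g • B) B) →
      (∃ x, B = {x}) ∨ B = Set.univ)
    (A : Set Ω) (hA0 : 0 < A.ncard) (hA2 : A.ncard ≤ Fintype.card Ω - 2)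
    (hstab : ∀ m ∈ Aᶜ, ∀ t ∈ Aᶜ, ∃ g : G, (∀ a ∈ A, g • a = a) ∧ g • m = t) :
    ∀ m t : Fin 2 ↪ Ω, ∃ g : G, ∀ j, g • m j = t j := by
  have : MulAction.IsPretransitive G Ω := ⟨htrans⟩
  have hG : MulAction.IsPreprimitive G Ω :=
    MulAction.isPreprimitive_of_forall_smul_eq_or_disjoint hprim
  have hA_card : A.ncard - 1 + 2 < Nat.card Ω := by rw [Nat.card_eq_fintype_card]; omega
  -- Jordan's criterion (Wielandt, *Finite permutation groups*, 13.1)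
  have : MulAction.IsMultiplyPretransitive G Ω 2 :=
    hG.is_two_pretransitive (Nat.succ_pred_eq_of_pos hA0).symm hA_card
      (MulAction.isPretransitive_ofFixingSubgroup_of_forall_exists_smul_eq hstab)
  exact MulAction.IsMultiplyPretransitive.exists_smul_apply_eq
end

section
/- Let n ≥ 1 and d ≥ 1 be integers, let F ∈ ℂ[x_1,…,x_{n+2}] be an irreducible homogeneous polynomial of degree d, and let P ∈ ℂ^{n+2} be a point with F(P) ≠ 0. Then the polynomial f_{F,P}(t) = F(Q_1 + t·P_1, …, Q_{n+2} + t·P_{n+2}), which has degree d in t with leading coefficient F(P), is irreducible in K[t]. (This expresses that the monodromy group of the projection of the irreducible hypersurface {F = 0} from the outer point [P] is a transitive subgroup of S_d.) -/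
set_option synthInstance.maxHeartbeats 1000000
set_option maxHeartbeats 1000000

/-- The field `K = ℂ(Q₁, …, Q_m)` of rational functions in `m` variables over `ℂ`. -/
noncomputable abbrev RatFuncField (m : ℕ) : Type :=
  FractionRing (MvPolynomial (Fin m) ℂ)

/-- `f_{F,P}(t) = F(Q₁ + t·P₁, …, Q_m + t·P_m) ∈ K[t]`, obtained by substituting
`x_i ↦ Q_i + t·P_i` in `F`. -/
noncomputable def fFP {m : ℕ} (F : MvPolynomial (Fin m) ℂ) (P : Fin m → ℂ) :
    Polynomial (RatFuncField m) :=
  MvPolynomial.eval₂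
    ((Polynomial.C : RatFuncField m →+* Polynomial (RatFuncField m)).comp
      ((algebraMap (MvPolynomial (Fin m) ℂ) (RatFuncField m)).comp
        (MvPolynomial.C : ℂ →+* MvPolynomial (Fin m) ℂ)))
    (fun i =>
      Polynomial.C (algebraMap (MvPolynomial (Fin m) ℂ) (RatFuncField m) (MvPolynomial.X i)) +
        Polynomial.C (algebraMap (MvPolynomial (Fin m) ℂ) (RatFuncField m)
          (MvPolynomial.C (P i))) * Polynomial.X)
    F

/-!
Over `R = ℂ[Q]`, `F(Q + t·P)` is the image of the constant polynomial `F` under the ring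
automorphism of `R[t]` fixing `t` and sending `Q_i ↦ Q_i + t·P_i` (its inverse uses `-P`).
Constants that are prime in `R` stay prime in `R[t]`, so `F(Q + t·P)` is irreducible over `R`.
Homogeneity makes its `t^d`-coefficient `F(P)`, a unit of `R`: so the polynomial is primitive of
degree `d`, and Gauss's lemma carries irreducibility over to `K = Frac R`.
-/

open Polynomial

namespace Polynomial

variable {R ι : Type*} [CommSemiring R]

theorem coeff_prod_sum_of_natDegree_le (s : Finset ι) (f : ι → R[X]) (n : ι → ℕ)
    (h : ∀ i ∈ s, (f i).natDegree ≤ n i) :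
    (∏ i ∈ s, f i).coeff (∑ i ∈ s, n i) = ∏ i ∈ s, (f i).coeff (n i) := by
  classical
  induction s using Finset.cons_induction with
  | empty => simp
  | cons a s _ ih =>
    have hs : ∀ i ∈ s, (f i).natDegree ≤ n i := fun i hi => h i (Finset.mem_cons_of_mem hi)
    rw [Finset.prod_cons, Finset.sum_cons, Finset.prod_cons,
      coeff_mul_add_eq_of_natDegree_le (h a (Finset.mem_cons_self a s))
        ((natDegree_prod_le s f).trans (Finset.sum_le_sum hs)), ih hs]

theorem isPrimitive_of_isUnit_coeff {p : R[X]} {n : ℕ} (hp : IsUnit (p.coeff n)) :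
    p.IsPrimitive := fun r hr =>
  isUnit_of_dvd_unit ((C_dvd_iff_dvd_coeff r p).mp hr n) hp

end Polynomial

namespace MvPolynomial

variable {σ R S : Type*} [CommSemiring R] [CommSemiring S] {g : σ → S[X]}

theorem natDegree_prod_pow_le_degree (hg : ∀ i, (g i).natDegree ≤ 1) (s : σ →₀ ℕ) :
    (∏ i ∈ s.support, g i ^ s i).natDegree ≤ s.degree :=
  (natDegree_prod_le _ _).trans <| Finset.sum_le_sum fun i _ =>
    natDegree_pow_le_of_le (s i) (hg i) |>.trans (mul_one (s i)).le

theorem coeff_prod_pow_degree (hg : ∀ i, (g i).natDegree ≤ 1) (s : σ →₀ ℕ) :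
    (∏ i ∈ s.support, g i ^ s i).coeff s.degree = ∏ i ∈ s.support, (g i).coeff 1 ^ s i := by
  rw [Finsupp.degree_apply, coeff_prod_sum_of_natDegree_le]
  · refine Finset.prod_congr rfl fun i _ => ?_
    simpa using coeff_pow_of_natDegree_le (m := s i) (hg i)
  · intro i _
    simpa using natDegree_pow_le_of_le (s i) (hg i)

namespace IsHomogeneous

variable {F : MvPolynomial σ R} {d : ℕ}

theorem degree_eq_of_mem_support (hF : F.IsHomogeneous d) {s : σ →₀ ℕ}
    (hs : s ∈ F.support) : s.degree = d := by
  by_contra h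
  exact mem_support_iff.mp hs (hF.coeff_eq_zero h)

theorem natDegree_eval₂_le (hF : F.IsHomogeneous d) (f : R →+* S)
    (hg : ∀ i, (g i).natDegree ≤ 1) : (F.eval₂ (Polynomial.C.comp f) g).natDegree ≤ d := by
  rw [eval₂_eq]
  refine natDegree_sum_le_of_forall_le _ _ fun s hs => ?_
  calc (Polynomial.C (f (F.coeff s)) * ∏ i ∈ s.support, g i ^ s i).natDegree
      ≤ (∏ i ∈ s.support, g i ^ s i).natDegree := natDegree_C_mul_le _ _
    _ ≤ d := hF.degree_eq_of_mem_support hs ▸ natDegree_prod_pow_le_degree hg s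

theorem coeff_eval₂ (hF : F.IsHomogeneous d) (f : R →+* S) (hg : ∀ i, (g i).natDegree ≤ 1) :
    (F.eval₂ (Polynomial.C.comp f) g).coeff d = F.eval₂ f (fun i => (g i).coeff 1) := by
  rw [eval₂_eq, eval₂_eq, finsetSum_coeff]
  refine Finset.sum_congr rfl fun s hs => ?_
  rw [RingHom.comp_apply, Polynomial.coeff_C_mul, ← hF.degree_eq_of_mem_support hs,
    coeff_prod_pow_degree hg]

end IsHomogeneous

end MvPolynomial

section LineSubstitution

variable {σ k : Type*}

section CommRing

variable [CommRing k] (P : σ → k)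

noncomputable def lineCoord (i : σ) : (MvPolynomial σ k)[X] :=
  C (MvPolynomial.X i) + C (MvPolynomial.C (P i)) * X

theorem natDegree_lineCoord_le (i : σ) : (lineCoord P i).natDegree ≤ 1 := by
  unfold lineCoord
  compute_degree

theorem coeff_lineCoord_one (i : σ) : (lineCoord P i).coeff 1 = MvPolynomial.C (P i) := by
  simp [lineCoord, coeff_C]

noncomputable def lineShiftHom : (MvPolynomial σ k)[X] →+* (MvPolynomial σ k)[X] :=
  eval₂RingHom (MvPolynomial.eval₂Hom (C.comp MvPolynomial.C) (lineCoord P)) X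

theorem lineShiftHom_neg_comp : (lineShiftHom (-P)).comp (lineShiftHom P) = RingHom.id _ := by
  refine ringHom_ext' (MvPolynomial.ringHom_ext (fun a => ?_) (fun i => ?_)) ?_
  · simp [lineShiftHom]
  · simp only [lineShiftHom, lineCoord, RingHom.coe_comp, coe_eval₂RingHom, Function.comp_apply,
      eval₂_C, MvPolynomial.eval₂Hom_X', eval₂_add, Pi.neg_apply, map_neg,
      eval₂_mul, MvPolynomial.eval₂Hom_C, eval₂_X, RingHomCompTriple.comp_eq]
    ring
  · simp [lineShiftHom]

noncomputable def lineShift : (MvPolynomial σ k)[X] ≃+* (MvPolynomial σ k)[X] :=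
  RingEquiv.ofRingHom (lineShiftHom P) (lineShiftHom (-P))
    (by simpa using lineShiftHom_neg_comp (-P)) (lineShiftHom_neg_comp P)

theorem lineShift_C (F : MvPolynomial σ k) :
    lineShift P (C F) = F.eval₂ (C.comp MvPolynomial.C) (lineCoord P) :=
  eval₂_C _ _

variable {P} {F : MvPolynomial σ k} {d : ℕ}

theorem natDegree_lineShift_C_le (hF : F.IsHomogeneous d) :
    (lineShift P (C F)).natDegree ≤ d := by
  rw [lineShift_C]
  exact hF.natDegree_eval₂_le _ (natDegree_lineCoord_le P)

theorem coeff_lineShift_C (hF : F.IsHomogeneous d) :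
    (lineShift P (C F)).coeff d = MvPolynomial.C (MvPolynomial.eval P F) := by
  rw [lineShift_C, hF.coeff_eval₂ _ (natDegree_lineCoord_le P)]
  simp only [coeff_lineCoord_one]
  exact (MvPolynomial.eval₂_comp_left _ (RingHom.id k) P F).symm

end CommRing

theorem irreducible_lineShift_C [Field k] (P : σ → k) {F : MvPolynomial σ k}
    (hF : Irreducible F) : Irreducible (lineShift P (C F)) := by
  rw [MulEquiv.irreducible_iff (lineShift P)]
  exact (prime_C_iff.mpr hF.prime).irreducible

end LineSubstitution

theorem fFP_eq_map_lineShift_C {m : ℕ} (F : MvPolynomial (Fin m) ℂ) (P : Fin m → ℂ) :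
    fFP F P = (lineShift P (C F)).map (algebraMap (MvPolynomial (Fin m) ℂ) (RatFuncField m)) := by
  rw [fFP, lineShift_C, ← coe_mapRingHom, MvPolynomial.eval₂_comp_left]
  congr 1
  · ext a
    simp
  · funext i
    simp [lineCoord]

theorem fFP_irreducible_of_irreducible_general (n d : ℕ)
    (F : MvPolynomial (Fin (n + 2)) ℂ) (hF : Irreducible F) (hhom : F.IsHomogeneous d)
    (P : Fin (n + 2) → ℂ) (hP : MvPolynomial.eval P F ≠ 0) :
    (fFP F P).natDegree = d ∧
    (fFP F P).leadingCoeff =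
      algebraMap (MvPolynomial (Fin (n + 2)) ℂ) (RatFuncField (n + 2))
        (MvPolynomial.C (MvPolynomial.eval P F)) ∧
    Irreducible (fFP F P) := by
  have hinj : Function.Injective
      (algebraMap (MvPolynomial (Fin (n + 2)) ℂ) (RatFuncField (n + 2))) :=
    IsFractionRing.injective _ _
  have hunit : IsUnit ((lineShift P (C F)).coeff d) := by
    rw [coeff_lineShift_C hhom]
    exact (isUnit_iff_ne_zero.mpr hP).map MvPolynomial.C
  have hdeg : (lineShift P (C F)).natDegree = d :=
    (natDegree_lineShift_C_le hhom).antisymm (le_natDegree_of_ne_zero hunit.ne_zero)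
  rw [fFP_eq_map_lineShift_C, natDegree_map_eq_of_injective hinj,
    leadingCoeff_map_of_injective hinj, leadingCoeff, hdeg, coeff_lineShift_C hhom,
    ← (isPrimitive_of_isUnit_coeff hunit).irreducible_iff_irreducible_map_fraction_map]
  exact ⟨rfl, rfl, irreducible_lineShift_C P hF⟩

/-- If `F` is an irreducible homogeneous polynomial of degree `d` in `n+2` variables and
`P ∈ ℂ^{n+2}` satisfies `F(P) ≠ 0`, then `f_{F,P}(t) = F(Q + t·P)` has degree `d` in `t`,
leading coefficient `F(P)`, and is irreducible in `K[t]`. -/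
theorem fFP_irreducible_of_irreducible (n d : ℕ) (hn : 1 ≤ n) (hd : 1 ≤ d)
    (F : MvPolynomial (Fin (n + 2)) ℂ) (hF : Irreducible F) (hhom : F.IsHomogeneous d)
    (P : Fin (n + 2) → ℂ) (hP : MvPolynomial.eval P F ≠ 0) :
    (fFP F P).natDegree = d ∧
    (fFP F P).leadingCoeff =
      algebraMap (MvPolynomial (Fin (n + 2)) ℂ) (RatFuncField (n + 2))
        (MvPolynomial.C (MvPolynomial.eval P F)) ∧
    Irreducible (fFP F P) :=
  fFP_irreducible_of_irreducible_general n d F hF hhom P hP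
end

section
/- Let n ≥ 1 and d ≥ 1 be integers, let F ∈ ℂ[x_1,…,x_{n+2}] be a squarefree homogeneous polynomial of degree d, and let P ∈ ℂ^{n+2} be a point with F(P) ≠ 0. Then the polynomial f_{F,P}(t) = F(Q_1 + t·P_1, …, Q_{n+2} + t·P_{n+2}) ∈ K[t] is squarefree, hence separable over K. (This expresses that the projection of the reduced hypersurface {F = 0} from the outer point [P] is generically étale of degree d, so that its monodromy group is well defined.) -/
/-!
Substituting `x ↦ Q + t•P` is the composite of `F ↦ C F` with the automorphism
`(Q, t) ↦ (Q + t•P, t)` of `ℂ[Q][t]` (its inverse uses `-P`), so `F(Q + t•P)` is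
squarefree in `ℂ[Q][t]` as soon as `F` is squarefree in `ℂ[Q]`. Since `ℂ[Q]` is a UFD, Gauss's lemma carries
squarefreeness from `ℂ[Q][t]` to `K[t]`, and over a field of characteristic zero squarefree
polynomials are separable.
-/

set_option synthInstance.maxHeartbeats 1000000
set_option maxHeartbeats 1000000

theorem Squarefree.map_mulEquiv {M N E : Type*} [Monoid M] [Monoid N] [EquivLike E M N]
    [MulEquivClass E M N] (e : E) {a : M} (ha : Squarefree a) : Squarefree (e a) := by
  intro x hx
  have hx' : (e : M ≃* N).symm x * (e : M ≃* N).symm x ∣ a := by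
    simpa using map_dvd (e : M ≃* N).symm hx
  simpa using (ha _ hx').map (e : M ≃* N)

namespace Polynomial

theorem squarefree_C {R : Type*} [CommRing R] [IsDomain R] {a : R} (ha : Squarefree a) :
    Squarefree (C a) := by
  rintro x ⟨y, hy⟩
  have hx0 : x ≠ 0 := by
    rintro rfl
    exact ha.ne_zero (by simpa using hy)
  have hdeg : (x * x).natDegree ≤ 0 := by
    simpa using natDegree_le_of_dvd ⟨y, hy⟩ (C_ne_zero.mpr ha.ne_zero)
  rw [natDegree_mul hx0 hx0, nonpos_iff_eq_zero, add_self_eq_zero] at hdeg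
  rw [eq_C_of_natDegree_eq_zero hdeg] at hy ⊢
  have ha' : a = x.coeff 0 * x.coeff 0 * y.coeff 0 := by
    simpa [← map_mul, coeff_C_mul] using congrArg (coeff · 0) hy
  exact isUnit_C.mpr (ha _ ⟨_, ha'⟩)

open IsLocalization

open scoped nonZeroDivisors

variable {R K : Type*} [CommRing R] [IsDomain R] [IsGCDMonoid R] [Field K] [Algebra R K]
  [IsFractionRing R K]

theorem exists_isPrimitive_associated_map {w : K[X]} (hw : w ≠ 0) :
    ∃ p : R[X], p.IsPrimitive ∧ Associated w (p.map (algebraMap R K)) := by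
  let : NormalizedGCDMonoid R := Nonempty.some inferInstance
  obtain ⟨s, hs, hsw⟩ := integerNormalization_spec R⁰ w
  set W := integerNormalization R⁰ w
  have hW : W ≠ 0 := IsFractionRing.integerNormalization_eq_zero_iff.not.mpr hw
  have hunit {r : R} (hr : r ≠ 0) : IsUnit (C (algebraMap R K r)) :=
    isUnit_C.mpr <| isUnit_iff_ne_zero.mpr <|
      (map_ne_zero_iff _ (IsFractionRing.injective R K)).mpr hr
  refine ⟨W.primPart, W.isPrimitive_primPart, ?_⟩
  have hW' : C (algebraMap R K W.content) * W.primPart.map (algebraMap R K)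
      = C (algebraMap R K s) * w := by
    rw [← map_C, ← Polynomial.map_mul, ← W.eq_C_content_mul_primPart, hsw, Algebra.smul_def,
      algebraMap_apply]
  exact (associated_unit_mul_left _ _ (hunit (nonZeroDivisors.ne_zero hs))).symm.trans
    (hW'.symm ▸ associated_unit_mul_left _ _ (hunit (content_eq_zero_iff.not.mpr hW)))

variable (K) in
theorem squarefree_map_fraction_map {g : R[X]} (hg : Squarefree g) :
    Squarefree (g.map (algebraMap R K)) := by
  let : NormalizedGCDMonoid R := Nonempty.some inferInstance
  intro w hw
  have hw0 : w ≠ 0 := by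
    rintro rfl
    exact hg.ne_zero <|
      (Polynomial.map_eq_zero_iff (IsFractionRing.injective R K)).mp (by simpa using hw)
  obtain ⟨p, hp, hwp⟩ := exists_isPrimitive_associated_map (R := R) hw0
  have hpp : p * p ∣ g := by
    apply (hp.mul hp).dvd_of_fraction_map_dvd_fraction_map (K := K)
    rwa [Polynomial.map_mul, ← (hwp.mul_mul hwp).dvd_iff_dvd_left]
  exact hwp.symm.isUnit ((hg p hpp).map (mapRingHom (algebraMap R K)))

end Polynomial

namespace MvPolynomial

variable {R σ : Type*} [CommRing R]

/-- `F ↦ F(Q + t•P)`, where the `Q_i` are the variables of `MvPolynomial σ R` and `t` is the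
polynomial variable. -/
noncomputable def substLine (P : σ → R) :
    MvPolynomial σ R →ₐ[R] Polynomial (MvPolynomial σ R) :=
  aeval fun i => Polynomial.C (X i) + Polynomial.C (C (P i)) * Polynomial.X

/-- The substitution `(Q, t) ↦ (Q + t•P, t)`. -/
noncomputable def shiftLine (P : σ → R) :
    Polynomial (MvPolynomial σ R) →ₐ[R] Polynomial (MvPolynomial σ R) :=
  Polynomial.aevalTower (substLine P) Polynomial.X

theorem shiftLine_comp_shiftLine_neg (P : σ → R) :
    (shiftLine P).comp (shiftLine (-P)) = AlgHom.id R _ := by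
  refine Polynomial.algHom_ext' (MvPolynomial.algHom_ext fun i => ?_) ?_
  · simp only [shiftLine, substLine, Pi.neg_apply, map_neg, AlgHom.coe_comp,
      Function.comp_apply, Polynomial.CAlgHom_apply, Polynomial.aevalTower_C, aeval_X, map_add,
      map_mul, algHom_C, Polynomial.algebraMap_apply, algebraMap_eq, Polynomial.aevalTower_X,
      AlgHom.id_comp]
    ring
  · simp [shiftLine]

noncomputable def shiftLineEquiv (P : σ → R) :
    Polynomial (MvPolynomial σ R) ≃ₐ[R] Polynomial (MvPolynomial σ R) :=
  .ofAlgHom (shiftLine P) (shiftLine (-P)) (shiftLine_comp_shiftLine_neg P)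
    (by simpa using shiftLine_comp_shiftLine_neg (-P))

theorem shiftLineEquiv_C (P : σ → R) (F : MvPolynomial σ R) :
    shiftLineEquiv P (Polynomial.C F) = substLine P F :=
  Polynomial.aevalTower_C _ _ _

theorem squarefree_substLine [IsDomain R] (P : σ → R) {F : MvPolynomial σ R}
    (hF : Squarefree F) : Squarefree (substLine P F) :=
  shiftLineEquiv_C P F ▸ (Polynomial.squarefree_C hF).map_mulEquiv (shiftLineEquiv P)

end MvPolynomial

theorem fFP_eq_map_substLine {m : ℕ} (F : MvPolynomial (Fin m) ℂ) (P : Fin m → ℂ) :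
    fFP F P = (MvPolynomial.substLine P F).map (algebraMap _ (RatFuncField m)) := by
  rw [fFP, MvPolynomial.substLine, MvPolynomial.aeval_def, ← Polynomial.coe_mapRingHom,
    MvPolynomial.eval₂_comp_left]
  congr 1
  · ext
    simp
  · ext
    simp

theorem fFP_squarefree_of_squarefree_general (n : ℕ)
    (F : MvPolynomial (Fin (n + 2)) ℂ) (hF : Squarefree F)
    (P : Fin (n + 2) → ℂ) :
    Squarefree (fFP F P) ∧ (fFP F P).Separable := by
  have hsf : Squarefree (fFP F P) := by
    rw [fFP_eq_map_substLine]
    exact Polynomial.squarefree_map_fraction_map _ (MvPolynomial.squarefree_substLine P hF)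
  exact ⟨hsf, PerfectField.separable_iff_squarefree.mpr hsf⟩

/-- If `F` is a squarefree homogeneous polynomial of degree `d` in `n+2` variables and
`P ∈ ℂ^{n+2}` satisfies `F(P) ≠ 0`, then `f_{F,P}(t) = F(Q + t·P)` is squarefree in `K[t]`,
hence separable over `K`. -/
theorem fFP_squarefree_of_squarefree (n d : ℕ) (hn : 1 ≤ n) (hd : 1 ≤ d)
    (F : MvPolynomial (Fin (n + 2)) ℂ) (hF : Squarefree F) (hhom : F.IsHomogeneous d)
    (P : Fin (n + 2) → ℂ) (hP : MvPolynomial.eval P F ≠ 0) :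
    Squarefree (fFP F P) ∧ (fFP F P).Separable :=
  fFP_squarefree_of_squarefree_general n F hF P
end
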